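/- Let a_{l,m} = (2l+4m)! / ((l+m)!·l!·(m!)³) and c_{l,m} = Σ_{j=1}^{2l+4m} 16/j² − Σ_{j=1}^{l+m} 1/j² − Σ_{j=1}^{m} 3/j². If complex λ, μ satisfy 256(|λ|+|μ|) < 1, then |Σ_{l+m≥N+1} a_{l,m}·c_{l,m}·λ^l·μ^m| ≤ (8π²/3)·((4(N+1))!/((N+1)!)^4)·(|λ|+|μ|)^(N+1)/(1 − 256(|λ|+|μ|)) for all natural numbers N. -/

import Mathlib

open Finset

noncomputable def aCoeff (l m : ℕ) : ℝ :=
  ((2 * l + 4 * m).factorial : ℝ) /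
    (((l + m).factorial : ℝ) * (l.factorial : ℝ) * ((m.factorial : ℝ)) ^ 3)

noncomputable def cCoeff (l m : ℕ) : ℝ :=
  (∑ j ∈ Finset.Icc 1 (2 * l + 4 * m), (16 : ℝ) / (j : ℝ) ^ 2) -
    (∑ j ∈ Finset.Icc 1 (l + m), (1 : ℝ) / (j : ℝ) ^ 2) -
    (∑ j ∈ Finset.Icc 1 m, (3 : ℝ) / (j : ℝ) ^ 2)


/-!
With `s = l + m`, the coefficient `c_{l,m}` lies between `0` and `16 ζ(2) = 8π²/3`, and
`a_{l,m} ≤ C(s, l) (4s)!/(s!)⁴` because `(2s + 2m)!/(m!)²` increases with `m`. The multinomial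
coefficient `(4s)!/(s!)⁴` grows at most by the factor `4⁴ = 256` from `s` to `s + 1`, so every
term of the tail is dominated by `8π²/3 · (4(N+1))!/((N+1)!)⁴ · 256^(s-N-1) C(s, l) |λ|^l |μ|^m`.
By the binomial theorem this majorant sums over each antidiagonal `l + m = s` to a term of a
geometric series of ratio `256 (|λ| + |μ|)`.
-/

noncomputable def baselPartialSum (n : ℕ) : ℝ := ∑ j ∈ Icc 1 n, 1 / (j : ℝ) ^ 2

lemma baselPartialSum_nonneg (n : ℕ) : 0 ≤ baselPartialSum n := by
  unfold baselPartialSum; positivity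

lemma baselPartialSum_mono : Monotone baselPartialSum := fun _ _ hab =>
  sum_le_sum_of_subset_of_nonneg (Icc_subset_Icc_right hab) fun _ _ _ => by positivity

lemma baselPartialSum_le (n : ℕ) : baselPartialSum n ≤ Real.pi ^ 2 / 6 :=
  calc baselPartialSum n ≤ ∑ j ∈ range (n + 1), 1 / (j : ℝ) ^ 2 :=
        sum_le_sum_of_subset_of_nonneg (fun j hj => by simp only [mem_Icc, mem_range] at hj ⊢; omega)
          fun _ _ _ => by positivity
    _ ≤ Real.pi ^ 2 / 6 := sum_le_hasSum _ (fun _ _ => by positivity) hasSum_zeta_two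

lemma cCoeff_eq (l m : ℕ) :
    cCoeff l m = 16 * baselPartialSum (2 * l + 4 * m) - baselPartialSum (l + m) -
      3 * baselPartialSum m := by
  simp only [cCoeff, baselPartialSum, mul_sum, mul_one_div]

lemma cCoeff_nonneg (l m : ℕ) : 0 ≤ cCoeff l m := by
  have h₁ := baselPartialSum_mono (show l + m ≤ 2 * l + 4 * m by omega)
  have h₂ := baselPartialSum_mono (show m ≤ 2 * l + 4 * m by omega)
  have h₃ := baselPartialSum_nonneg (2 * l + 4 * m)
  rw [cCoeff_eq]; linarith

lemma cCoeff_le (l m : ℕ) : cCoeff l m ≤ 8 * Real.pi ^ 2 / 3 := by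
  have h₁ := baselPartialSum_le (2 * l + 4 * m)
  have h₂ := baselPartialSum_nonneg (l + m)
  have h₃ := baselPartialSum_nonneg m
  rw [cCoeff_eq]; linarith

lemma aCoeff_nonneg (l m : ℕ) : 0 ≤ aCoeff l m := by
  unfold aCoeff; positivity

noncomputable def multinomialFour (s : ℕ) : ℝ := ((4 * s).factorial : ℝ) / (s.factorial : ℝ) ^ 4

lemma multinomialFour_nonneg (s : ℕ) : 0 ≤ multinomialFour s := by
  unfold multinomialFour; positivity

lemma factorial_mul_factorial_sq_le (k : ℕ) {m m' : ℕ} (h : m ≤ m') :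
    (k + 2 * m).factorial * m'.factorial ^ 2 ≤ (k + 2 * m').factorial * m.factorial ^ 2 := by
  induction m', h using Nat.le_induction with
  | base => rfl
  | succ n _ ih =>
    have hsucc : (k + 2 * (n + 1)).factorial =
        (k + 2 * n + 2) * (k + 2 * n + 1) * (k + 2 * n).factorial := by
      rw [show k + 2 * (n + 1) = k + 2 * n + 1 + 1 by ring, Nat.factorial_succ,
        Nat.factorial_succ]; ring
    have hle : (n + 1) * (n + 1) ≤ (k + 2 * n + 2) * (k + 2 * n + 1) :=
      Nat.mul_le_mul (by omega) (by omega)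
    rw [hsucc, Nat.factorial_succ]
    calc (k + 2 * m).factorial * ((n + 1) * n.factorial) ^ 2
        = (n + 1) * (n + 1) * ((k + 2 * m).factorial * n.factorial ^ 2) := by ring
      _ ≤ (k + 2 * n + 2) * (k + 2 * n + 1) *
          ((k + 2 * n).factorial * m.factorial ^ 2) := Nat.mul_le_mul hle ih
      _ = _ := by ring

lemma aCoeff_le (l m : ℕ) : aCoeff l m ≤ (l + m).choose l * multinomialFour (l + m) := by
  have hfac : ((2 * l + 4 * m).factorial : ℝ) * (l + m).factorial ^ 2 ≤
      (4 * (l + m)).factorial * m.factorial ^ 2 := by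
    have h := factorial_mul_factorial_sq_le (2 * (l + m)) (show m ≤ l + m by omega)
    rw [show 2 * (l + m) + 2 * m = 2 * l + 4 * m by ring,
      show 2 * (l + m) + 2 * (l + m) = 4 * (l + m) by ring] at h
    exact_mod_cast h
  have hchoose : ((l + m).choose l : ℝ) * l.factorial * m.factorial = (l + m).factorial := by
    rw [Nat.choose_symm_add]; exact_mod_cast Nat.add_choose_mul_factorial_mul_factorial l m
  rw [aCoeff, multinomialFour, mul_div_assoc', div_le_div_iff₀ (by positivity) (by positivity)]
  calc ((2 * l + 4 * m).factorial : ℝ) * (l + m).factorial ^ 4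
      = ((2 * l + 4 * m).factorial * (l + m).factorial ^ 2) * ((l + m).factorial : ℝ) ^ 2 := by
        ring
    _ ≤ ((4 * (l + m)).factorial * m.factorial ^ 2) * ((l + m).factorial : ℝ) ^ 2 := by gcongr
    _ = _ := by rw [← hchoose]; ring

lemma multinomialFour_succ_le (s : ℕ) : multinomialFour (s + 1) ≤ 256 * multinomialFour s := by
  have hsucc : (4 * (s + 1)).factorial =
      (4 * s + 4) * (4 * s + 3) * (4 * s + 2) * (4 * s + 1) * (4 * s).factorial := by
    rw [show 4 * (s + 1) = 4 * s + 1 + 1 + 1 + 1 by ring]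
    simp only [Nat.factorial_succ]; ring
  have hle : (4 * s + 4) * (4 * s + 3) * (4 * s + 2) * (4 * s + 1) ≤ 256 * (s + 1) ^ 4 := by
    calc (4 * s + 4) * (4 * s + 3) * (4 * s + 2) * (4 * s + 1)
        ≤ (4 * s + 4) * (4 * s + 4) * (4 * s + 4) * (4 * s + 4) := by gcongr <;> omega
      _ = 256 * (s + 1) ^ 4 := by ring
  rw [multinomialFour, multinomialFour, mul_div_assoc',
    div_le_div_iff₀ (by positivity) (by positivity), hsucc, Nat.factorial_succ]
  push_cast
  calc ((4 * s + 4) * (4 * s + 3) * (4 * s + 2) * (4 * s + 1) : ℝ) * (4 * s).factorial *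
        (s.factorial : ℝ) ^ 4
      ≤ (256 * (s + 1) ^ 4 : ℝ) * (4 * s).factorial * (s.factorial : ℝ) ^ 4 := by
        gcongr ?_ * _ * _; exact_mod_cast hle
    _ = _ := by ring

lemma multinomialFour_le {N s : ℕ} (h : N ≤ s) :
    multinomialFour s ≤ multinomialFour N * 256 ^ (s - N) := by
  induction s, h using Nat.le_induction with
  | base => simp
  | succ s hs ih =>
    calc multinomialFour (s + 1) ≤ 256 * multinomialFour s := multinomialFour_succ_le s
      _ ≤ 256 * (multinomialFour N * 256 ^ (s - N)) := by gcongr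
      _ = multinomialFour N * 256 ^ (s + 1 - N) := by
        rw [Nat.sub_add_comm hs, pow_succ]; ring

lemma HasSum.of_sum_antidiagonal_of_nonneg {A : Type*} [AddCommMonoid A] [HasAntidiagonal A]
    {f : A × A → ℝ} (hf : ∀ p, 0 ≤ f p) {a : ℝ}
    (h : HasSum (fun n => ∑ p ∈ antidiagonal n, f p) a) : HasSum f a := by
  have hfiber (n : A) : ∑' p : antidiagonal n, f p = ∑ p ∈ antidiagonal n, f p := by
    rw [tsum_fintype, sum_coe_sort]
  have hsigma : Summable fun z : Σ n : A, antidiagonal n => f z.2 :=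
    (summable_sigma_of_nonneg fun _ => hf _).2
      ⟨fun _ => (hasSum_fintype _).summable, by simpa only [hfiber] using h.summable⟩
  have hsum : ∑' z : Σ n : A, antidiagonal n, f z.2 = a := by
    rw [hsigma.tsum_sigma' fun _ => (hasSum_fintype _).summable]
    simpa only [hfiber] using h.tsum_eq
  rw [← HasAntidiagonal.sigmaAntidiagonalEquivProd.hasSum_iff]
  exact hsum ▸ hsigma.hasSum

lemma hasSum_ite_geometric {r : ℝ} (hr₀ : 0 ≤ r) (hr₁ : r < 1) (N : ℕ) :
    HasSum (fun n => if N ≤ n then r ^ (n - N) else 0) (1 - r)⁻¹ := by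
  have hhead : ∑ n ∈ range N, (if N ≤ n then r ^ (n - N) else 0) = 0 :=
    sum_eq_zero fun n hn => if_neg (by simpa using hn)
  rw [← hasSum_nat_add_iff' N, hhead, sub_zero]
  simpa using hasSum_geometric_of_lt_one hr₀ hr₁

noncomputable def tailMajorant (N : ℕ) (x y : ℝ) (p : ℕ × ℕ) : ℝ :=
  if N ≤ p.1 + p.2 then
    multinomialFour N * 256 ^ (p.1 + p.2 - N) * ((p.1 + p.2).choose p.1 * x ^ p.1 * y ^ p.2)
  else 0

lemma tailMajorant_nonneg (N : ℕ) {x y : ℝ} (hx : 0 ≤ x) (hy : 0 ≤ y) (p : ℕ × ℕ) :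
    0 ≤ tailMajorant N x y p := by
  have := multinomialFour_nonneg N
  unfold tailMajorant; split_ifs <;> positivity

lemma sum_antidiagonal_tailMajorant (N : ℕ) (x y : ℝ) (n : ℕ) :
    ∑ p ∈ antidiagonal n, tailMajorant N x y p =
      multinomialFour N * (x + y) ^ N * if N ≤ n then (256 * (x + y)) ^ (n - N) else 0 := by
  have hfiber : ∀ p ∈ antidiagonal n, tailMajorant N x y p =
      if N ≤ n then multinomialFour N * 256 ^ (n - N) * (n.choose p.1 * x ^ p.1 * y ^ p.2)
      else 0 := by
    intro p hp
    rw [HasAntidiagonal.mem_antidiagonal] at hp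
    simp only [tailMajorant, hp]
  rw [sum_congr rfl hfiber]
  split_ifs with hN
  · have hbinom : ∑ p ∈ antidiagonal n, (n.choose p.1 : ℝ) * x ^ p.1 * y ^ p.2 =
        (x + y) ^ N * (x + y) ^ (n - N) := by
      rw [← pow_add, Nat.add_sub_cancel' hN, (Commute.all x y).add_pow']
      simp only [nsmul_eq_mul, mul_assoc]
    rw [← mul_sum, hbinom, mul_pow]
    ring
  · simp

lemma hasSum_tailMajorant (N : ℕ) {x y : ℝ} (hx : 0 ≤ x) (hy : 0 ≤ y) (h : 256 * (x + y) < 1) :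
    HasSum (tailMajorant N x y) (multinomialFour N * (x + y) ^ N / (1 - 256 * (x + y))) := by
  refine HasSum.of_sum_antidiagonal_of_nonneg (tailMajorant_nonneg N hx hy) ?_
  simp only [sum_antidiagonal_tailMajorant, div_eq_mul_inv]
  exact (hasSum_ite_geometric (by positivity) h N).mul_left _

lemma norm_term_le_tailMajorant {N l m : ℕ} (h : N ≤ l + m) (lam mu : ℂ) :
    ‖(aCoeff l m : ℂ) * (cCoeff l m : ℂ) * lam ^ l * mu ^ m‖ ≤
      8 * Real.pi ^ 2 / 3 * tailMajorant N ‖lam‖ ‖mu‖ (l, m) := by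
  have hN := multinomialFour_nonneg N
  have ha : aCoeff l m ≤ (l + m).choose l * (multinomialFour N * 256 ^ (l + m - N)) :=
    (aCoeff_le l m).trans (by gcongr; exact multinomialFour_le h)
  simp only [norm_mul, norm_pow, Complex.norm_real, Real.norm_of_nonneg (aCoeff_nonneg l m),
    Real.norm_of_nonneg (cCoeff_nonneg l m), tailMajorant, if_pos h]
  calc aCoeff l m * cCoeff l m * ‖lam‖ ^ l * ‖mu‖ ^ m
      ≤ (l + m).choose l * (multinomialFour N * 256 ^ (l + m - N)) * (8 * Real.pi ^ 2 / 3) *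
          ‖lam‖ ^ l * ‖mu‖ ^ m := by
        gcongr
        exacts [cCoeff_nonneg l m, cCoeff_le l m]
    _ = _ := by ring

theorem tail_bound_delta4 (N : ℕ) (lam mu : ℂ)
    (h : 256 * (‖lam‖ + ‖mu‖) < 1) :
    Summable (fun p : ℕ × ℕ =>
      if N + 1 ≤ p.1 + p.2 then (aCoeff p.1 p.2 : ℂ) * (cCoeff p.1 p.2 : ℂ) * lam ^ p.1 * mu ^ p.2
      else 0) ∧
    ‖(∑' p : ℕ × ℕ,
        if N + 1 ≤ p.1 + p.2 then (aCoeff p.1 p.2 : ℂ) * (cCoeff p.1 p.2 : ℂ) * lam ^ p.1 * mu ^ p.2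
        else 0)‖ ≤
      8 * Real.pi ^ 2 / 3 * (((4 * (N + 1)).factorial : ℝ) / ((N + 1).factorial : ℝ) ^ 4) *
        (‖lam‖ + ‖mu‖) ^ (N + 1) /
        (1 - 256 * (‖lam‖ + ‖mu‖)) := by
  have hmajorant := (hasSum_tailMajorant (N + 1) (norm_nonneg lam) (norm_nonneg mu) h).mul_left
    (8 * Real.pi ^ 2 / 3)
  have hbound : ∀ p : ℕ × ℕ, ‖if N + 1 ≤ p.1 + p.2 then
      (aCoeff p.1 p.2 : ℂ) * (cCoeff p.1 p.2 : ℂ) * lam ^ p.1 * mu ^ p.2 else 0‖ ≤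
      8 * Real.pi ^ 2 / 3 * tailMajorant (N + 1) ‖lam‖ ‖mu‖ p := by
    rintro ⟨l, m⟩
    split_ifs with hp
    · exact norm_term_le_tailMajorant hp lam mu
    · simp [tailMajorant, hp]
  refine ⟨hmajorant.summable.of_norm_bounded hbound,
    (tsum_of_norm_bounded hmajorant hbound).trans_eq ?_⟩
  rw [multinomialFour]
  ring
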